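/- There is a constant C such that for all t ≥ 0 and all f ∈ H²(ℝ²) with ⟨t-r⟩∂^α f ∈ L² for |α| ≤ 2: ⟨t⟩ ‖f‖_{L^∞({|x| ≤ ⟨t/2⟩})} ≤ C ∑_{|α| ≤ 2} ‖⟨t-|x|⟩ ∂^α f‖_{L²(ℝ²)}. -/

import Mathlib

open MeasureTheory

/-- `⟨σ⟩ = √(1+σ²)`. -/
noncomputable def jap (σ : ℝ) : ℝ := Real.sqrt (1 + σ ^ 2)

/-- Partial derivative `∂_i f` on `ℝ²`. -/
noncomputable def pderiv2 (i : Fin 2) (f : EuclideanSpace ℝ (Fin 2) → ℝ)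
    (x : EuclideanSpace ℝ (Fin 2)) : ℝ :=
  fderiv ℝ f x (EuclideanSpace.single i 1)

/-!
Averaging the fundamental theorem of calculus along the sides of the unit square
`Q = x + [0,1]²` gives `|f x| ≤ ∫_Q (|f| + |∂₁f| + |∂₀f| + |∂₁∂₀f|)`, an elementary form of
`H²(ℝ²) ↪ L^∞`. For `|x| ≤ ⟨t/2⟩` every `y ∈ Q` has `|y| ≤ ⟨t/2⟩ + 2`, hence `⟨t⟩ ≤ 13⟨t - |y|⟩`;
as `Q` has area one, Cauchy–Schwarz then bounds `⟨t⟩ ∫_Q |h|` by `13 ‖⟨t - r⟩ h‖_{L²}`.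
-/

open Set

local notation "E2" => EuclideanSpace ℝ (Fin 2)

lemma one_le_jap (σ : ℝ) : 1 ≤ jap σ :=
  Real.one_le_sqrt.2 (by nlinarith [sq_nonneg σ])

lemma jap_pos (σ : ℝ) : 0 < jap σ := one_pos.trans_le (one_le_jap σ)

lemma abs_le_jap (σ : ℝ) : |σ| ≤ jap σ := Real.abs_le_sqrt (by linarith)

lemma jap_le_one_add_abs (σ : ℝ) : jap σ ≤ 1 + |σ| :=
  Real.sqrt_le_iff.2 ⟨by positivity, by nlinarith [sq_abs σ, abs_nonneg σ]⟩

lemma continuous_jap : Continuous jap := by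
  unfold jap; fun_prop

lemma jap_le_mul_jap_sub {t r : ℝ} (ht : 0 ≤ t) (hr : r ≤ jap (t / 2) + 2) :
    jap t ≤ 13 * jap (t - r) := by
  have hjt : jap t ≤ 1 + t := by simpa [abs_of_nonneg ht] using jap_le_one_add_abs t
  have hr' : r ≤ t / 2 + 3 := by
    have := jap_le_one_add_abs (t / 2)
    rw [abs_of_nonneg (by linarith)] at this
    linarith
  have h1 := one_le_jap (t - r)
  have h2 := (le_abs_self (t - r)).trans (abs_le_jap (t - r))
  rcases le_or_gt t 12 with h | h <;> linarith

section LineIntegrals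

variable {E : Type*} [NormedAddCommGroup E] [NormedSpace ℝ E]

lemma hasDerivAt_apply_add_smul {g : E → ℝ} (hg : Differentiable ℝ g) (y v : E) (s : ℝ) :
    HasDerivAt (fun s : ℝ => g (y + s • v)) (fderiv ℝ g (y + s • v) v) s := by
  have hline : HasDerivAt (fun s : ℝ => y + s • v) v s := by
    simpa using ((hasDerivAt_id s).smul_const v).const_add y
  exact (hg _).hasFDerivAt.comp_hasDerivAt s hline

lemma abs_le_integral_abs_add_abs_deriv {g g' : ℝ → ℝ} (hg : ∀ s, HasDerivAt g (g' s) s)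
    (hg' : Continuous g') : |g 0| ≤ ∫ s in (0 : ℝ)..1, (|g s| + |g' s|) := by
  have hgc : Continuous g := continuous_iff_continuousAt.2 fun s => (hg s).continuousAt
  have hpt : ∀ s ∈ Icc (0 : ℝ) 1, |g 0| ≤ |g s| + ∫ u in (0 : ℝ)..1, |g' u| := by
    intro s hs
    have hftc : ∫ u in (0 : ℝ)..s, g' u = g s - g 0 :=
      intervalIntegral.integral_eq_sub_of_hasDerivAt (fun u _ => hg u) (hg'.intervalIntegrable _ _)
    have hbound : |∫ u in (0 : ℝ)..s, g' u| ≤ ∫ u in (0 : ℝ)..1, |g' u| :=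
      (intervalIntegral.abs_integral_le_integral_abs hs.1).trans
        (intervalIntegral.integral_mono_interval le_rfl hs.1 hs.2
          (Filter.Eventually.of_forall fun _ => abs_nonneg _) (hg'.abs.intervalIntegrable _ _))
    calc |g 0| = |g s - ∫ u in (0 : ℝ)..s, g' u| := by rw [hftc, sub_sub_cancel]
      _ ≤ |g s| + |∫ u in (0 : ℝ)..s, g' u| := abs_sub _ _
      _ ≤ _ := by gcongr
  calc |g 0| = ∫ _ in (0 : ℝ)..1, |g 0| := by simp
    _ ≤ ∫ s in (0 : ℝ)..1, (|g s| + ∫ u in (0 : ℝ)..1, |g' u|) :=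
        intervalIntegral.integral_mono_on zero_le_one intervalIntegrable_const
          ((hgc.abs.add continuous_const).intervalIntegrable _ _) hpt
    _ = ∫ s in (0 : ℝ)..1, (|g s| + |g' s|) := by
        rw [intervalIntegral.integral_add (hgc.abs.intervalIntegrable _ _) intervalIntegrable_const,
          intervalIntegral.integral_add (hgc.abs.intervalIntegrable _ _)
            (hg'.abs.intervalIntegrable _ _)]
        simp

lemma intervalIntegral_intervalIntegral_eq_setIntegral_Icc {F : ℝ × ℝ → ℝ} (hF : Continuous F)
    {a b : ℝ × ℝ} (hab : a ≤ b) :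
    ∫ s in a.1..b.1, ∫ u in a.2..b.2, F (s, u) = ∫ p in Icc a b, F p := by
  have hint : IntegrableOn F (Icc a.1 b.1 ×ˢ Icc a.2 b.2) (volume.prod volume) := by
    rw [← Measure.volume_eq_prod, ← Icc_prod_eq]
    exact hF.integrableOn_Icc
  rw [Icc_prod_eq, Measure.volume_eq_prod, setIntegral_prod _ hint, integral_Icc_eq_integral_Ioc,
    ← intervalIntegral.integral_of_le hab.1]
  congr 1 with s
  rw [integral_Icc_eq_integral_Ioc, ← intervalIntegral.integral_of_le hab.2]

lemma abs_le_intervalIntegral_of_contDiff {g : E → ℝ} (hg : ContDiff ℝ 1 g) (y w : E) :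
    |g y| ≤ ∫ u in (0 : ℝ)..1, (|g (y + u • w)| + |fderiv ℝ g (y + u • w) w|) := by
  simpa using abs_le_integral_abs_add_abs_deriv
    (hasDerivAt_apply_add_smul (hg.differentiable one_ne_zero) y w) (by fun_prop)

lemma abs_le_setIntegral_Icc_of_contDiff {f : E → ℝ} (hf : ContDiff ℝ 2 f) (x v w : E) :
    |f x| ≤ ∫ p in Icc (0 : ℝ × ℝ) 1,
      (|f (x + p.1 • v + p.2 • w)| + |fderiv ℝ f (x + p.1 • v + p.2 • w) w|
        + |fderiv ℝ f (x + p.1 • v + p.2 • w) v|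
        + |fderiv ℝ (fun z => fderiv ℝ f z v) (x + p.1 • v + p.2 • w) w|) := by
  set g : E → ℝ := fun z => fderiv ℝ f z v
  have hf1 : ContDiff ℝ 1 f := hf.of_le (by norm_num)
  have hg : ContDiff ℝ 1 g := (hf.fderiv_right (m := 1) (by norm_num)).clm_apply contDiff_const
  set F : ℝ × ℝ → ℝ := fun p =>
    |f (x + p.1 • v + p.2 • w)| + |fderiv ℝ f (x + p.1 • v + p.2 • w) w|
      + |g (x + p.1 • v + p.2 • w)| + |fderiv ℝ g (x + p.1 • v + p.2 • w) w|
  have hF : Continuous F := by fun_prop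
  have hline : ∀ s : ℝ, |f (x + s • v)| + |g (x + s • v)| ≤ ∫ u in (0 : ℝ)..1, F (s, u) := by
    intro s
    calc _ ≤ _ := add_le_add (abs_le_intervalIntegral_of_contDiff hf1 (x + s • v) w)
          (abs_le_intervalIntegral_of_contDiff hg (x + s • v) w)
      _ = ∫ u in (0 : ℝ)..1, F (s, u) := by
        rw [← intervalIntegral.integral_add]
        · simp only [F, add_assoc]
        all_goals exact Continuous.intervalIntegrable (by fun_prop) _ _
  calc |f x| ≤ _ := abs_le_intervalIntegral_of_contDiff hf1 x v
    _ ≤ ∫ s in (0 : ℝ)..1, ∫ u in (0 : ℝ)..1, F (s, u) :=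
        intervalIntegral.integral_mono_on zero_le_one
          (Continuous.intervalIntegrable (by fun_prop) _ _)
          ((intervalIntegral.continuous_parametric_intervalIntegral_of_continuous' hF 0 1
            |>.intervalIntegrable _ _))
          fun s _ => hline s
    _ = ∫ p in Icc (0 : ℝ × ℝ) 1, F p :=
        intervalIntegral_intervalIntegral_eq_setIntegral_Icc hF zero_le_one

end LineIntegrals

lemma abs_setIntegral_le_sqrt_integral_sq {Ω : Type*} [MeasurableSpace Ω] {μ : Measure Ω}
    {s : Set Ω} (hs : μ s = 1) {g : Ω → ℝ} (hg : AEStronglyMeasurable g μ)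
    (hg2 : Integrable (fun ω => g ω ^ 2) μ) :
    |∫ ω in s, g ω ∂μ| ≤ Real.sqrt (∫ ω, g ω ^ 2 ∂μ) := by
  have : IsProbabilityMeasure (μ.restrict s) := ⟨by rw [Measure.restrict_apply_univ, hs]⟩
  have hmem : MemLp g 2 (μ.restrict s) :=
    (memLp_two_iff_integrable_sq hg.restrict).2 hg2.restrict
  have hvar := ProbabilityTheory.variance_nonneg g (μ.restrict s)
  rw [ProbabilityTheory.variance_eq_sub hmem] at hvar
  refine Real.abs_le_sqrt ((sub_nonneg.1 hvar).trans ?_)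
  exact setIntegral_le_integral hg2 (Filter.Eventually.of_forall fun _ => sq_nonneg _)

noncomputable def planeChart (x : E2) (p : ℝ × ℝ) : E2 :=
  x + p.1 • EuclideanSpace.single 0 1 + p.2 • EuclideanSpace.single 1 1

lemma planeChart_eq_coe_measurableEquiv (x : E2) :
    planeChart x = ⇑((MeasurableEquiv.finTwoArrow.symm.trans
      (MeasurableEquiv.toLp 2 (Fin 2 → ℝ))).trans (MeasurableEquiv.addLeft x)) := by
  ext p i
  fin_cases i <;> simp [planeChart, add_assoc, MeasurableEquiv.finTwoArrow]

lemma measurePreserving_planeChart (x : E2) : MeasurePreserving (planeChart x) := by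
  rw [planeChart_eq_coe_measurableEquiv]
  exact ((volume_preserving_finTwoArrow ℝ).symm _ |>.trans (PiLp.volume_preserving_toLp _)).trans
    (measurePreserving_add_left _ x)

lemma measurableEmbedding_planeChart (x : E2) : MeasurableEmbedding (planeChart x) := by
  rw [planeChart_eq_coe_measurableEquiv]
  exact MeasurableEquiv.measurableEmbedding _

lemma continuous_planeChart (x : E2) : Continuous (planeChart x) := by
  unfold planeChart; fun_prop

lemma norm_planeChart_le (x : E2) {p : ℝ × ℝ} (hp : p ∈ Icc 0 1) :
    ‖planeChart x p‖ ≤ ‖x‖ + 2 := by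
  rw [Icc_prod_eq] at hp
  obtain ⟨⟨hs0, hs1⟩, hu0, hu1⟩ := hp
  calc ‖planeChart x p‖ ≤ ‖x‖ + ‖p.1 • EuclideanSpace.single (0 : Fin 2) (1 : ℝ)‖
        + ‖p.2 • EuclideanSpace.single (1 : Fin 2) (1 : ℝ)‖ := norm_add₃_le
    _ ≤ ‖x‖ + 2 := by
        simp only [norm_smul, PiLp.norm_single, norm_one, mul_one, Real.norm_eq_abs,
          abs_of_nonneg hs0, abs_of_nonneg hu0]
        simp only [Prod.fst_one, Prod.snd_one] at hs1 hu1
        linarith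

lemma jap_mul_setIntegral_abs_planeChart_le {t : ℝ} (ht : 0 ≤ t) {x : E2} (hx : ‖x‖ ≤ jap (t / 2))
    {h : E2 → ℝ} (hh : Continuous h) (hi : Integrable fun y : E2 => (jap (t - ‖y‖) * h y) ^ 2) :
    jap t * ∫ p in Icc (0 : ℝ × ℝ) 1, |h (planeChart x p)|
      ≤ 13 * Real.sqrt (∫ y : E2, (jap (t - ‖y‖) * h y) ^ 2) := by
  set H : E2 → ℝ := fun y => jap (t - ‖y‖) * h y
  have hHc : Continuous H := (continuous_jap.comp (continuous_const.sub continuous_norm)).mul hh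
  have hκ := measurePreserving_planeChart x
  have hpt : ∀ p ∈ Icc (0 : ℝ × ℝ) 1, jap t * |h (planeChart x p)| ≤ 13 * |H (planeChart x p)| := by
    intro p hp
    have hw := jap_le_mul_jap_sub ht ((norm_planeChart_le x hp).trans (by linarith))
    rw [abs_mul, abs_of_pos (jap_pos _), ← mul_assoc]
    exact mul_le_mul_of_nonneg_right hw (abs_nonneg _)
  have hvol : volume (Icc (0 : ℝ × ℝ) 1) = 1 := by
    rw [Icc_prod_eq, Measure.volume_eq_prod, Measure.prod_prod]
    simp
  have hH2 : Integrable (fun p => H (planeChart x p) ^ 2) :=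
    (hκ.integrable_comp_emb (measurableEmbedding_planeChart x)).2 hi
  have hsq : ∫ p, H (planeChart x p) ^ 2 = ∫ y, H y ^ 2 :=
    hκ.integral_comp (measurableEmbedding_planeChart x) fun y => H y ^ 2
  calc jap t * ∫ p in Icc (0 : ℝ × ℝ) 1, |h (planeChart x p)|
      = ∫ p in Icc (0 : ℝ × ℝ) 1, jap t * |h (planeChart x p)| := (integral_const_mul _ _).symm
    _ ≤ ∫ p in Icc (0 : ℝ × ℝ) 1, 13 * |H (planeChart x p)| :=
        setIntegral_mono_on
          ((hh.comp (continuous_planeChart x)).abs.const_mul _).integrableOn_Icc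
          ((hHc.comp (continuous_planeChart x)).abs.const_mul _).integrableOn_Icc
          measurableSet_Icc hpt
    _ = 13 * ∫ p in Icc (0 : ℝ × ℝ) 1, |H (planeChart x p)| := integral_const_mul _ _
    _ ≤ 13 * Real.sqrt (∫ y, H y ^ 2) := by
        gcongr
        rw [← hsq]
        have hL2 := abs_setIntegral_le_sqrt_integral_sq (g := fun p => |H (planeChart x p)|) hvol
          (hHc.comp (continuous_planeChart x)).abs.aestronglyMeasurable (by simpa only [sq_abs])
        simp only [sq_abs] at hL2
        exact (le_abs_self _).trans hL2

lemma ContDiff.pderiv2 {m n : WithTop ℕ∞} {f : E2 → ℝ} (hf : ContDiff ℝ n f) (hmn : m + 1 ≤ n)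
    (i : Fin 2) : ContDiff ℝ m (pderiv2 i f) :=
  (hf.fderiv_right hmn).clm_apply contDiff_const

/-- Lemma 3.4: for `t ≥ 0` and `f ∈ H²(ℝ²)` with `⟨t-r⟩∂^α f ∈ L²` for `|α| ≤ 2`:
`⟨t⟩ ‖f‖_{L^∞(r ≤ ⟨t/2⟩)} ≤ C ∑_{|α| ≤ 2} ‖⟨t-r⟩ ∂^α f‖_{L²(ℝ²)}`. -/
theorem interior_decay :
    ∃ C : ℝ, 0 < C ∧
      ∀ (t : ℝ) (f : EuclideanSpace ℝ (Fin 2) → ℝ), 0 ≤ t →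
        ContDiff ℝ 2 f →
        Integrable (fun y : EuclideanSpace ℝ (Fin 2) => (jap (t - ‖y‖) * f y) ^ 2) →
        (∀ i : Fin 2, Integrable
          (fun y : EuclideanSpace ℝ (Fin 2) => (jap (t - ‖y‖) * pderiv2 i f y) ^ 2)) →
        (∀ i j : Fin 2, Integrable
          (fun y : EuclideanSpace ℝ (Fin 2) => (jap (t - ‖y‖) * pderiv2 i (pderiv2 j f) y) ^ 2)) →
        ∀ x : EuclideanSpace ℝ (Fin 2), ‖x‖ ≤ jap (t / 2) →
          jap t * |f x| ≤
            C * (Real.sqrt (∫ y : EuclideanSpace ℝ (Fin 2), (jap (t - ‖y‖) * f y) ^ 2) +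
                 (∑ i : Fin 2, Real.sqrt
                    (∫ y : EuclideanSpace ℝ (Fin 2), (jap (t - ‖y‖) * pderiv2 i f y) ^ 2)) +
                 ∑ i : Fin 2, ∑ j : Fin 2, Real.sqrt
                    (∫ y : EuclideanSpace ℝ (Fin 2),
                      (jap (t - ‖y‖) * pderiv2 i (pderiv2 j f) y) ^ 2)) := by
  refine ⟨13, by norm_num, fun t f ht hf hi0 hi1 hi2 x hx => ?_⟩
  have hf' : ∀ i, ContDiff ℝ 1 (pderiv2 i f) := hf.pderiv2 (by norm_num)
  have hf'' : Continuous (pderiv2 1 (pderiv2 0 f)) :=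
    ((hf' 0).pderiv2 (m := 0) (by norm_num) 1).continuous
  have hint : ∀ {h : E2 → ℝ}, Continuous h →
      IntegrableOn (fun p => |h (planeChart x p)|) (Icc (0 : ℝ × ℝ) 1) := fun hh =>
    (hh.comp (continuous_planeChart x)).abs.integrableOn_Icc
  have hpt : |f x| ≤ ∫ p in Icc (0 : ℝ × ℝ) 1, (|f (planeChart x p)|
      + |pderiv2 1 f (planeChart x p)| + |pderiv2 0 f (planeChart x p)|
      + |pderiv2 1 (pderiv2 0 f) (planeChart x p)|) :=
    abs_le_setIntegral_Icc_of_contDiff hf x _ _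
  have h0 := hint hf.continuous
  have h1 := hint (hf' 1).continuous
  have h2 := hint (hf' 0).continuous
  rw [integral_add ((h0.fun_add h1).fun_add h2) (hint hf''), integral_add (h0.fun_add h1) h2,
    integral_add h0 h1] at hpt
  have hw0 := jap_mul_setIntegral_abs_planeChart_le ht hx hf.continuous hi0
  have hw1 := jap_mul_setIntegral_abs_planeChart_le ht hx (hf' 1).continuous (hi1 1)
  have hw2 := jap_mul_setIntegral_abs_planeChart_le ht hx (hf' 0).continuous (hi1 0)
  have hw3 := jap_mul_setIntegral_abs_planeChart_le ht hx hf'' (hi2 1 0)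
  have hpt' := mul_le_mul_of_nonneg_left hpt (jap_pos t).le
  simp only [Fin.sum_univ_two]
  linarith [Real.sqrt_nonneg (∫ y : E2, (jap (t - ‖y‖) * pderiv2 0 (pderiv2 0 f) y) ^ 2),
    Real.sqrt_nonneg (∫ y : E2, (jap (t - ‖y‖) * pderiv2 0 (pderiv2 1 f) y) ^ 2),
    Real.sqrt_nonneg (∫ y : E2, (jap (t - ‖y‖) * pderiv2 1 (pderiv2 1 f) y) ^ 2)]
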